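/- arXiv:2412.12008 — 3 statements merged into one kernel-verified Lean document; each statement's English description precedes it below -/
import Mathlib

section
/- The digital image M = {(0,0), (0,1), (1,0), (1,1)} ⊆ ℤ² with the 4-adjacency is a digital 1-manifold (every point has exactly two neighbors in M, which are not 4-adjacent to each other, so its induced neighborhood is digitally isomorphic to N₂(s) = {s−1, s+1} in ℤ), yet M is not digitally isomorphic to any digital interval [a,b]_ℤ with the 2-adjacency, nor to the digital 1-sphere S¹ = [−1,1]²_ℤ \ {(0,0)} with the 4-adjacency or with the 8-adjacency. -/
/-- `κ_l`-adjacency on `ℤⁿ`: two distinct points are `κ_l`-adjacent if they differ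
by at most `1` in every coordinate and differ in at most `l` coordinates. -/
def adjK (l n : ℕ) (x y : Fin n → ℤ) : Prop :=
  x ≠ y ∧ (∀ k, |x k - y k| ≤ 1) ∧
    (Finset.univ.filter fun k => x k ≠ y k).card ≤ l

/-- the 2-adjacency on `ℤ` -/
def adj2 (x y : ℤ) : Prop := |x - y| = 1

/-- the 4-adjacency on `ℤ²` -/
def adj4 (x y : ℤ × ℤ) : Prop := |x.1 - y.1| + |x.2 - y.2| = 1

/-- the 8-adjacency on `ℤ²` -/
def adj8 (x y : ℤ × ℤ) : Prop := x ≠ y ∧ |x.1 - y.1| ≤ 1 ∧ |x.2 - y.2| ≤ 1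

/-- the 6-adjacency on `ℤ³` -/
def adj6 (x y : ℤ × ℤ × ℤ) : Prop :=
  |x.1 - y.1| + |x.2.1 - y.2.1| + |x.2.2 - y.2.2| = 1

/-- the digital neighborhood of `m` taken within `M`: the points of `M` that are
`r`-adjacent to `m` -/
def Nbhd {X : Type*} (r : X → X → Prop) (M : Set X) (m : X) : Set X :=
  {p ∈ M | r m p}

/-- a digital isomorphism between the digital images `(A, rX)` and `(B, rY)`:
a bijection preserving and reflecting adjacency -/
def DigIso {X Y : Type*} (rX : X → X → Prop) (A : Set X)
    (rY : Y → Y → Prop) (B : Set Y) : Prop :=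
  ∃ α : A ≃ B, ∀ x y : A, rX x.1 y.1 ↔ rY (α x).1 (α y).1

/-- `D₊ⁿ`, the points of `ℤⁿ` with all coordinates nonnegative -/
def Dplus (n : ℕ) : Set (Fin n → ℤ) := {x | ∀ k, 0 ≤ x k}

/-- `m` has a chart into `(ℤⁿ, κ₁)`: its digital neighborhood within `M` is digitally
isomorphic to the digital neighborhood of some point `s` taken in `(ℤⁿ, κ₁)` -/
def ChartZ {X : Type*} (r : X → X → Prop) (M : Set X) (m : X) (n : ℕ) : Prop :=
  ∃ s : Fin n → ℤ, DigIso r (Nbhd r M m) (adjK 1 n) (Nbhd (adjK 1 n) Set.univ s)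

/-- `m` has a chart into `(D₊ⁿ, κ₁)` -/
def ChartD {X : Type*} (r : X → X → Prop) (M : Set X) (m : X) (n : ℕ) : Prop :=
  ∃ s ∈ Dplus n, DigIso r (Nbhd r M m) (adjK 1 n) (Nbhd (adjK 1 n) (Dplus n) s)

/-- `(M, r)` is a digital `n`-manifold (without boundary): `n` is the least
nonnegative integer such that every point has a chart into `(ℤⁿ, κ₁)` -/
def IsDigManifold {X : Type*} (r : X → X → Prop) (M : Set X) (n : ℕ) : Prop :=
  (∀ m ∈ M, ChartZ r M m n) ∧ ∀ k < n, ¬ ∀ m ∈ M, ChartZ r M m k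

/-- `(M, r)` is a digital `n`-manifold with boundary: `n` is the least nonnegative
integer such that every point has a chart into `(ℤⁿ, κ₁)` or into `(D₊ⁿ, κ₁)` -/
def IsDigManifoldBd {X : Type*} (r : X → X → Prop) (M : Set X) (n : ℕ) : Prop :=
  (∀ m ∈ M, ChartZ r M m n ∨ ChartD r M m n) ∧
    ∀ k < n, ¬ ∀ m ∈ M, ChartZ r M m k ∨ ChartD r M m k

/-- the interior of a digital `n`-manifold with boundary: the points admitting a
chart into `(ℤⁿ, κ₁)` -/
def dInterior {X : Type*} (r : X → X → Prop) (M : Set X) (n : ℕ) : Set X :=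
  {m ∈ M | ChartZ r M m n}

/-- the boundary of a digital `n`-manifold with boundary: the points of `M` not
admitting a chart into `(ℤⁿ, κ₁)` -/
def dBoundary {X : Type*} (r : X → X → Prop) (M : Set X) (n : ℕ) : Set X :=
  {m ∈ M | ¬ ChartZ r M m n}

/-- `S` is digitally connected w.r.t. adjacency `r`: any two points are joined by a
chain of points of `S` in which consecutive points are adjacent -/
def ConnOn {X : Type*} (r : X → X → Prop) (S : Set X) : Prop :=
  ∀ x ∈ S, ∀ y ∈ S,
    Relation.ReflTransGen (fun p q => p ∈ S ∧ q ∈ S ∧ r p q) x y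

/-- the digital support of an integer-valued function -/
def sp {A : Type*} (f : A → ℤ) : Set A := {p | f p ≠ 0}

open Classical in
/-- the digital Euler characteristic of a finite digital image: the alternating sum
`Σ (-1)^r α_r` where `α_r` is the number of `r`-dimensional simplices, i.e.
`(r+1)`-element subsets of `M` whose points are pairwise adjacent -/
noncomputable def eulerChar {X : Type*} (r : X → X → Prop) (M : Finset X) : ℤ :=
  ∑ k ∈ Finset.range M.card, (-1 : ℤ) ^ k *
    (((M.powersetCard (k + 1)).filter fun S => ∀ x ∈ S, ∀ y ∈ S, x ≠ y → r x y).card : ℤ)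

/-- the digital image `M = {(0,0), (0,1), (1,0), (1,1)}` -/
def Sq4 : Set (ℤ × ℤ) := {(0, 0), (0, 1), (1, 0), (1, 1)}

/-- the digital 1-sphere `S¹ = [-1,1]²_ℤ \ {(0,0)}` -/
def digS1 : Set (ℤ × ℤ) := {p | (|p.1| ≤ 1 ∧ |p.2| ≤ 1) ∧ p ≠ (0, 0)}

section Aux

lemma adj2_iff (x y : ℤ) : adj2 x y ↔ (x - y = 1 ∨ x - y = -1) := by
  unfold adj2
  rcases abs_cases (x - y) with ⟨h, h'⟩ | ⟨h, h'⟩ <;> rw [h] <;> omega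

lemma adj4_iff (x y : ℤ × ℤ) : adj4 x y ↔
    (x.1 = y.1 ∧ (x.2 = y.2 + 1 ∨ x.2 = y.2 - 1)) ∨
    (x.2 = y.2 ∧ (x.1 = y.1 + 1 ∨ x.1 = y.1 - 1)) := by
  unfold adj4
  rcases abs_cases (x.1 - y.1) with ⟨h1, h1'⟩ | ⟨h1, h1'⟩ <;>
    rcases abs_cases (x.2 - y.2) with ⟨h2, h2'⟩ | ⟨h2, h2'⟩ <;> rw [h1, h2] <;> omega

lemma digIso_pair {X Y : Type*} (rX : X → X → Prop) (rY : Y → Y → Prop)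
    (a₁ a₂ : X) (b₁ b₂ : Y) (ha : a₁ ≠ a₂) (hb : b₁ ≠ b₂)
    (hA : ∀ x ∈ ({a₁, a₂} : Set X), ∀ y ∈ ({a₁, a₂} : Set X), ¬ rX x y)
    (hB : ∀ x ∈ ({b₁, b₂} : Set Y), ∀ y ∈ ({b₁, b₂} : Set Y), ¬ rY x y) :
    DigIso rX {a₁, a₂} rY {b₁, b₂} := by
  classical
  refine ⟨⟨fun x => if x.1 = a₁ then ⟨b₁, by simp⟩ else ⟨b₂, by simp⟩,
    fun y => if y.1 = b₁ then ⟨a₁, by simp⟩ else ⟨a₂, by simp⟩, ?_, ?_⟩, ?_⟩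
  · rintro ⟨x, hx⟩
    rcases hx with h | h <;> subst h <;> simp [ha, Ne.symm ha, hb, Ne.symm hb]
  · rintro ⟨y, hy⟩
    rcases hy with h | h <;> subst h <;> simp [ha, Ne.symm ha, hb, Ne.symm hb]
  · rintro ⟨x, hx⟩ ⟨y, hy⟩
    constructor
    · intro h; exact absurd h (hA x hx y hy)
    · intro h
      exfalso
      refine hB _ ?_ _ ?_ h <;> dsimp <;> split <;> simp

lemma nbhd2 (s : ℤ) : Nbhd adj2 Set.univ s = {s - 1, s + 1} := by
  ext t
  simp only [Nbhd, Set.mem_setOf_eq, Set.mem_univ, true_and, adj2_iff,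
    Set.mem_insert_iff, Set.mem_singleton_iff]
  omega

lemma noadj2 (s : ℤ) : ∀ x ∈ ({s - 1, s + 1} : Set ℤ),
    ∀ y ∈ ({s - 1, s + 1} : Set ℤ), ¬ adj2 x y := by
  rintro x (rfl | rfl) y (rfl | rfl) <;> rw [adj2_iff] <;> omega

lemma nbhd_sq4_00 : Nbhd adj4 Sq4 (0, 0) = {(0, 1), (1, 0)} := by
  ext ⟨x, y⟩
  simp only [Nbhd, Sq4, Set.mem_setOf_eq, Set.mem_insert_iff, Set.mem_singleton_iff,
    adj4_iff, Prod.mk.injEq]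
  omega

lemma nbhd_sq4_01 : Nbhd adj4 Sq4 (0, 1) = {(0, 0), (1, 1)} := by
  ext ⟨x, y⟩
  simp only [Nbhd, Sq4, Set.mem_setOf_eq, Set.mem_insert_iff, Set.mem_singleton_iff,
    adj4_iff, Prod.mk.injEq]
  omega

lemma nbhd_sq4_10 : Nbhd adj4 Sq4 (1, 0) = {(0, 0), (1, 1)} := by
  ext ⟨x, y⟩
  simp only [Nbhd, Sq4, Set.mem_setOf_eq, Set.mem_insert_iff, Set.mem_singleton_iff,
    adj4_iff, Prod.mk.injEq]
  omega

lemma nbhd_sq4_11 : Nbhd adj4 Sq4 (1, 1) = {(0, 1), (1, 0)} := by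
  ext ⟨x, y⟩
  simp only [Nbhd, Sq4, Set.mem_setOf_eq, Set.mem_insert_iff, Set.mem_singleton_iff,
    adj4_iff, Prod.mk.injEq]
  omega

lemma noadjA : ∀ x ∈ ({((0:ℤ), (1:ℤ)), (1, 0)} : Set (ℤ × ℤ)),
    ∀ y ∈ ({((0:ℤ), (1:ℤ)), (1, 0)} : Set (ℤ × ℤ)), ¬ adj4 x y := by
  rintro x (rfl | rfl) y (rfl | rfl) <;> rw [adj4_iff] <;> simp

lemma noadjB : ∀ x ∈ ({((0:ℤ), (0:ℤ)), (1, 1)} : Set (ℤ × ℤ)),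
    ∀ y ∈ ({((0:ℤ), (0:ℤ)), (1, 1)} : Set (ℤ × ℤ)), ¬ adj4 x y := by
  rintro x (rfl | rfl) y (rfl | rfl) <;> rw [adj4_iff] <;> simp

lemma neA : ((0:ℤ), (1:ℤ)) ≠ ((1:ℤ), (0:ℤ)) := by simp
lemma neB : ((0:ℤ), (0:ℤ)) ≠ ((1:ℤ), (1:ℤ)) := by simp

lemma nbhdK1 : Nbhd (adjK 1 1) Set.univ (fun _ => 0) =
    ({fun _ => -1, fun _ => 1} : Set (Fin 1 → ℤ)) := by
  ext x
  constructor
  · rintro ⟨-, hne, hle, -⟩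
    have hx : x = fun _ => x 0 := funext fun k => by rw [Subsingleton.elim k 0]
    have h0 : x 0 ≠ 0 := by
      intro h
      exact hne (funext fun k => by rw [Subsingleton.elim k 0, h])
    have h1 : x 0 = -1 ∨ x 0 = 1 := by
      have := hle 0
      rcases abs_cases ((0:ℤ) - x 0) with ⟨he, he'⟩ | ⟨he, he'⟩ <;> rw [he] at this <;> omega
    simp only [Set.mem_insert_iff, Set.mem_singleton_iff]
    rcases h1 with h | h
    · left; rw [hx, h]
    · right; rw [hx, h]
  · have key : ∀ c : ℤ, c = -1 ∨ c = 1 →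
        (fun _ : Fin 1 => c) ∈ Nbhd (adjK 1 1) Set.univ (fun _ => 0) := by
      intro c hc
      refine ⟨trivial, ?_, fun k => ?_, ?_⟩
      · intro h
        have := congrFun h 0
        omega
      · simp only
        rcases abs_cases ((0:ℤ) - c) with ⟨he, he'⟩ | ⟨he, he'⟩ <;> rw [he] <;> omega
      · exact le_trans (Finset.card_filter_le _ _) (by simp)
    rintro (rfl | rfl)
    · exact key _ (Or.inl rfl)
    · exact key _ (Or.inr rfl)

lemma neK : (fun _ : Fin 1 => (-1:ℤ)) ≠ (fun _ => 1) := by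
  intro h
  have := congrFun h 0
  norm_num at this

lemma noadjK : ∀ x ∈ ({fun _ => -1, fun _ => 1} : Set (Fin 1 → ℤ)),
    ∀ y ∈ ({fun _ => -1, fun _ => 1} : Set (Fin 1 → ℤ)), ¬ adjK 1 1 x y := by
  have hs : ∀ x : Fin 1 → ℤ, ¬ adjK 1 1 x x := fun x h => h.1 rfl
  have h : ¬ adjK 1 1 (fun _ : Fin 1 => (-1:ℤ)) (fun _ => 1) := by
    rintro ⟨-, hle, -⟩
    have : |(-1:ℤ) - 1| ≤ 1 := hle 0
    norm_num at this
  have h' : ¬ adjK 1 1 (fun _ : Fin 1 => (1:ℤ)) (fun _ => -1) := by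
    rintro ⟨-, hle, -⟩
    have : |(1:ℤ) - (-1)| ≤ 1 := hle 0
    norm_num at this
  rintro x (rfl | rfl) y (rfl | rfl)
  exacts [hs _, h, h', hs _]

lemma two_nbrs : ∀ m ∈ Sq4, ∃ p q : ℤ × ℤ,
    p ∈ Sq4 ∧ q ∈ Sq4 ∧ p ≠ q ∧ adj4 m p ∧ adj4 m q := by
  intro m hm
  simp only [Sq4, Set.mem_insert_iff, Set.mem_singleton_iff] at hm
  rcases hm with rfl | rfl | rfl | rfl
  · exact ⟨(0, 1), (1, 0), by simp [Sq4], by simp [Sq4], by simp,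
      by rw [adj4_iff]; simp, by rw [adj4_iff]; simp⟩
  · exact ⟨(0, 0), (1, 1), by simp [Sq4], by simp [Sq4], by simp,
      by rw [adj4_iff]; simp, by rw [adj4_iff]; simp⟩
  · exact ⟨(0, 0), (1, 1), by simp [Sq4], by simp [Sq4], by simp,
      by rw [adj4_iff]; simp, by rw [adj4_iff]; simp⟩
  · exact ⟨(0, 1), (1, 0), by simp [Sq4], by simp [Sq4], by simp,
      by rw [adj4_iff]; simp, by rw [adj4_iff]; simp⟩

lemma sq4_ncard : Sq4.ncard = 4 := by
  have h : Sq4 = (↑({((0:ℤ), (0:ℤ)), (0, 1), (1, 0), (1, 1)} : Finset (ℤ × ℤ)) : Set (ℤ × ℤ)) := by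
    ext p; simp [Sq4]
  rw [h, Set.ncard_coe_finset]
  decide

lemma digS1_ncard : digS1.ncard = 8 := by
  have h : digS1 = (↑({((-1:ℤ), (-1:ℤ)), (-1, 0), (-1, 1), (0, -1), (0, 1), (1, -1), (1, 0), (1, 1)} :
      Finset (ℤ × ℤ)) : Set (ℤ × ℤ)) := by
    ext ⟨x, y⟩
    simp only [digS1, Set.mem_setOf_eq, abs_le, ne_eq, Prod.mk.injEq, not_and,
      Finset.coe_insert, Set.mem_insert_iff, Finset.coe_singleton, Set.mem_singleton_iff]
    constructor
    · rintro ⟨⟨⟨h1, h2⟩, h3, h4⟩, h5⟩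
      have : ¬ (x = 0 ∧ y = 0) := by
        intro ⟨hx, hy⟩; exact h5 hx hy
      omega
    · intro h
      refine ⟨⟨⟨by omega, by omega⟩, by omega, by omega⟩, ?_⟩
      intro hx hy
      omega
  rw [h, Set.ncard_coe_finset]
  decide

lemma ncard_ne {A B : Set (ℤ × ℤ)} (hA : A.ncard = 4) (hB : B.ncard = 8)
    (r₁ r₂ : ℤ × ℤ → ℤ × ℤ → Prop) : ¬ DigIso r₁ A r₂ B := by
  rintro ⟨α, -⟩
  have := Nat.card_congr α
  rw [Nat.card_coe_set_eq, Nat.card_coe_set_eq, hA, hB] at this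
  omega

end Aux

/-- `M = {(0,0),(0,1),(1,0),(1,1)}` with the 4-adjacency is a digital
1-manifold (each point has exactly two pairwise non-adjacent neighbors, giving
neighborhoods digitally isomorphic to `N₂(s) = {s-1,s+1}`), yet `M` is not digitally
isomorphic to any digital interval `[a,b]_ℤ` with the 2-adjacency, nor to `S¹` with
the 4-adjacency or with the 8-adjacency. -/
theorem stmt_16 :
    (∀ m ∈ Sq4,
      (Nbhd adj4 Sq4 m).ncard = 2 ∧
      (∀ p ∈ Nbhd adj4 Sq4 m, ∀ q ∈ Nbhd adj4 Sq4 m, ¬ adj4 p q) ∧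
      ∀ s : ℤ, DigIso adj4 (Nbhd adj4 Sq4 m) adj2 (Nbhd adj2 Set.univ s)) ∧
    IsDigManifold adj4 Sq4 1 ∧
    (∀ a b : ℤ, ¬ DigIso adj4 Sq4 adj2 (Set.Icc a b)) ∧
    ¬ DigIso adj4 Sq4 adj4 digS1 ∧
    ¬ DigIso adj4 Sq4 adj8 digS1 := by
  have chart1 : ∀ m ∈ Sq4, ChartZ adj4 Sq4 m 1 := by
    intro m hm
    refine ⟨fun _ => 0, ?_⟩
    rw [nbhdK1]
    simp only [Sq4, Set.mem_insert_iff, Set.mem_singleton_iff] at hm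
    rcases hm with rfl | rfl | rfl | rfl
    · rw [nbhd_sq4_00]; exact digIso_pair _ _ _ _ _ _ neA neK noadjA noadjK
    · rw [nbhd_sq4_01]; exact digIso_pair _ _ _ _ _ _ neB neK noadjB noadjK
    · rw [nbhd_sq4_10]; exact digIso_pair _ _ _ _ _ _ neB neK noadjB noadjK
    · rw [nbhd_sq4_11]; exact digIso_pair _ _ _ _ _ _ neA neK noadjA noadjK
  refine ⟨?_, ⟨chart1, ?_⟩, ?_, ncard_ne sq4_ncard digS1_ncard _ _,
    ncard_ne sq4_ncard digS1_ncard _ _⟩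
  · intro m hm
    simp only [Sq4, Set.mem_insert_iff, Set.mem_singleton_iff] at hm
    rcases hm with rfl | rfl | rfl | rfl <;>
      [rw [nbhd_sq4_00]; rw [nbhd_sq4_01]; rw [nbhd_sq4_10]; rw [nbhd_sq4_11]]
    · exact ⟨Set.ncard_pair neA, noadjA, fun s => by
        rw [nbhd2]; exact digIso_pair _ _ _ _ _ _ neA (by omega) noadjA (noadj2 s)⟩
    · exact ⟨Set.ncard_pair neB, noadjB, fun s => by
        rw [nbhd2]; exact digIso_pair _ _ _ _ _ _ neB (by omega) noadjB (noadj2 s)⟩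
    · exact ⟨Set.ncard_pair neB, noadjB, fun s => by
        rw [nbhd2]; exact digIso_pair _ _ _ _ _ _ neB (by omega) noadjB (noadj2 s)⟩
    · exact ⟨Set.ncard_pair neA, noadjA, fun s => by
        rw [nbhd2]; exact digIso_pair _ _ _ _ _ _ neA (by omega) noadjA (noadj2 s)⟩
  · intro k hk
    have hk0 : k = 0 := by omega
    subst hk0
    intro hall
    obtain ⟨s, α, hα⟩ := hall (0, 0) (by simp [Sq4])
    have hmem : ((0:ℤ), (1:ℤ)) ∈ Nbhd adj4 Sq4 (0, 0) := by
      rw [nbhd_sq4_00]; simp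
    obtain ⟨-, hne, -, -⟩ := (α ⟨(0, 1), hmem⟩).2
    exact hne (Subsingleton.elim _ _)
  · rintro a b ⟨α, hα⟩
    have h0 : ((0:ℤ), (0:ℤ)) ∈ Sq4 := by simp [Sq4]
    have hab : a ≤ b := by
      have h2 := (α ⟨(0, 0), h0⟩).2
      rw [Set.mem_Icc] at h2
      omega
    have haI : a ∈ Set.Icc a b := by rw [Set.mem_Icc]; omega
    obtain ⟨p, q, hpS, hqS, hpq, hmp, hmq⟩ :=
      two_nbrs (α.symm ⟨a, haI⟩).1 (α.symm ⟨a, haI⟩).2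
    have h1 := (hα (α.symm ⟨a, haI⟩) ⟨p, hpS⟩).mp hmp
    have h2 := (hα (α.symm ⟨a, haI⟩) ⟨q, hqS⟩).mp hmq
    rw [Equiv.apply_symm_apply] at h1 h2
    have h1' : adj2 a (α ⟨p, hpS⟩ : ℤ) := h1
    have h2' : adj2 a (α ⟨q, hqS⟩ : ℤ) := h2
    have hp1 : (α ⟨p, hpS⟩).1 = a + 1 := by
      have hm := (α ⟨p, hpS⟩).2
      rw [Set.mem_Icc] at hm
      rw [adj2_iff] at h1'
      omega
    have hq1 : (α ⟨q, hqS⟩).1 = a + 1 := by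
      have hm := (α ⟨q, hqS⟩).2
      rw [Set.mem_Icc] at hm
      rw [adj2_iff] at h2'
      omega
    have heq : α ⟨p, hpS⟩ = α ⟨q, hqS⟩ := Subtype.ext (hp1.trans hq1.symm)
    exact hpq (congrArg Subtype.val (α.injective heq))
end

section
/- The digital image M = [1,3]_ℤ × [1,3]_ℤ ⊆ ℤ² with the 4-adjacency is a digital 2-manifold with boundary whose interior is int(M) = {(2,2)} and whose boundary is ∂M = M \ {(2,2)}; consequently the interior of a digital 2-manifold with boundary need not be a digital 2-manifold: int(M) = {(2,2)} is a digital 0-manifold, while ∂M with the induced 4-adjacency is a digital 1-manifold (every point of ∂M has exactly two neighbors in ∂M, pairwise non-4-adjacent). -/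
/-- the digital image `M = [1,3]_ℤ × [1,3]_ℤ` -/
def Sq9 : Set (ℤ × ℤ) := {p | 1 ≤ p.1 ∧ p.1 ≤ 3 ∧ 1 ≤ p.2 ∧ p.2 ≤ 3}
section Helpers

lemma fin2_ext (x y : Fin 2 → ℤ) : x = y ↔ x 0 = y 0 ∧ x 1 = y 1 := by
  constructor
  · rintro rfl; exact ⟨rfl, rfl⟩
  · rintro ⟨h0, h1⟩; funext k; fin_cases k <;> assumption

lemma fin1_ext (x y : Fin 1 → ℤ) : x = y ↔ x 0 = y 0 := by
  constructor
  · rintro rfl; exact rfl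
  · intro h; funext k; fin_cases k; exact h

lemma adjK2_iff (x y : Fin 2 → ℤ) : adjK 1 2 x y ↔
    (x 0 = y 0 ∧ (x 1 - y 1).natAbs = 1) ∨ (x 1 = y 1 ∧ (x 0 - y 0).natAbs = 1) := by
  have huniv : (Finset.univ : Finset (Fin 2)) = {0, 1} := by decide
  constructor
  · rintro ⟨hne, hle, hcard⟩
    have h0 := hle 0; have h1 := hle 1
    rw [abs_le] at h0 h1
    by_cases e0 : x 0 = y 0 <;> by_cases e1 : x 1 = y 1
    · exact absurd ((fin2_ext x y).2 ⟨e0, e1⟩) hne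
    · left; exact ⟨e0, by omega⟩
    · right; exact ⟨e1, by omega⟩
    · exfalso
      have : (Finset.univ.filter fun k => x k ≠ y k) = {0, 1} := by
        rw [huniv]; rw [Finset.filter_insert, Finset.filter_singleton]
        simp [e0, e1]
      rw [this] at hcard; simp at hcard
  · intro h
    refine ⟨?_, ?_, ?_⟩
    · intro he; subst he; rcases h with ⟨_, h⟩ | ⟨_, h⟩ <;> omega
    · rw [Fin.forall_fin_two]; constructor <;> rw [abs_le] <;>
        rcases h with ⟨h1, h2⟩ | ⟨h1, h2⟩ <;> omega
    · rw [Finset.card_le_one]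
      intro a ha b hb
      simp only [Finset.mem_filter] at ha hb
      fin_cases a <;> fin_cases b <;> simp_all <;>
        rcases h with ⟨h1, h2⟩ | ⟨h1, h2⟩ <;> simp_all

lemma adjK1_iff (x y : Fin 1 → ℤ) : adjK 1 1 x y ↔ (x 0 - y 0).natAbs = 1 := by
  constructor
  · rintro ⟨hne, hle, -⟩
    have h0 := hle 0; rw [abs_le] at h0
    have : x 0 ≠ y 0 := fun h => hne ((fin1_ext x y).2 h)
    omega
  · intro h
    refine ⟨fun he => by subst he; omega, ?_, ?_⟩
    · rw [Fin.forall_fin_one]; rw [abs_le]; omega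
    · exact (Finset.card_filter_le _ _).trans (by decide)

lemma adjK0 (x y : Fin 0 → ℤ) : ¬ adjK 1 0 x y := fun h => h.1 (funext fun k => k.elim0)

lemma adj4_discrete {m p q : ℤ × ℤ} (hp : adj4 m p) (hq : adj4 m q) : ¬ adj4 p q := by
  simp only [adj4, Int.abs_eq_natAbs, ← Int.natCast_natAbs] at *
  omega

lemma adjK2_discrete {s x y : Fin 2 → ℤ} (hx : adjK 1 2 s x) (hy : adjK 1 2 s y) :
    ¬ adjK 1 2 x y := by
  rw [adjK2_iff] at hx hy ⊢
  rcases hx with ⟨h1, h2⟩ | ⟨h1, h2⟩ <;> rcases hy with ⟨h3, h4⟩ | ⟨h3, h4⟩ <;> omega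

lemma adjK1_discrete {s x y : Fin 1 → ℤ} (hx : adjK 1 1 s x) (hy : adjK 1 1 s y) :
    ¬ adjK 1 1 x y := by
  rw [adjK1_iff] at hx hy ⊢; omega

lemma digIso_ncard_eq {X Y : Type*} {rX : X → X → Prop} {A : Set X}
    {rY : Y → Y → Prop} {B : Set Y} (h : DigIso rX A rY B) : A.ncard = B.ncard := by
  obtain ⟨e, -⟩ := h
  rw [← Nat.card_coe_set_eq, ← Nat.card_coe_set_eq]
  exact Nat.card_congr e

lemma digIso_discrete {X Y : Type*} {rX : X → X → Prop} {A : Set X}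
    {rY : Y → Y → Prop} {B : Set Y}
    (hA : ∀ x ∈ A, ∀ y ∈ A, ¬ rX x y) (hB : ∀ x ∈ B, ∀ y ∈ B, ¬ rY x y)
    (hAf : A.Finite) (hBf : B.Finite) (h : A.ncard = B.ncard) : DigIso rX A rY B := by
  have : Fintype A := hAf.fintype
  have : Fintype B := hBf.fintype
  have hc : Fintype.card A = Fintype.card B := by
    rw [← Nat.card_eq_fintype_card, ← Nat.card_eq_fintype_card,
      Nat.card_coe_set_eq, Nat.card_coe_set_eq]
    exact h
  refine ⟨Fintype.equivOfCardEq hc, fun x y =>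
    iff_of_false (hA _ x.2 _ y.2)
      (hB _ ((Fintype.equivOfCardEq hc) x).2 _ ((Fintype.equivOfCardEq hc) y).2)⟩

end Helpers
section Helpers2

lemma NZ2_eq (s : Fin 2 → ℤ) : Nbhd (adjK 1 2) Set.univ s =
    {![s 0 + 1, s 1], ![s 0 - 1, s 1], ![s 0, s 1 + 1], ![s 0, s 1 - 1]} := by
  ext x
  simp only [Nbhd, Set.mem_sep_iff, Set.mem_setOf_eq, Set.mem_univ, true_and, adjK2_iff,
    Set.mem_insert_iff, Set.mem_singleton_iff, fin2_ext, Matrix.cons_val_zero,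
    Matrix.cons_val_one, Matrix.head_cons]
  omega

lemma NZ2_finite (s : Fin 2 → ℤ) : (Nbhd (adjK 1 2) Set.univ s).Finite := by
  rw [NZ2_eq]
  exact (((Set.finite_singleton _).insert _).insert _).insert _

lemma NZ2_ncard (s : Fin 2 → ℤ) : (Nbhd (adjK 1 2) Set.univ s).ncard = 4 := by
  rw [NZ2_eq]
  rw [Set.ncard_insert_of_notMem (by
      simp only [Set.mem_insert_iff, Set.mem_singleton_iff, fin2_ext, Matrix.cons_val_zero,
        Matrix.cons_val_one, Matrix.head_cons]; omega) (Set.toFinite _),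
    Set.ncard_insert_of_notMem (by
      simp only [Set.mem_insert_iff, Set.mem_singleton_iff, fin2_ext, Matrix.cons_val_zero,
        Matrix.cons_val_one, Matrix.head_cons]; omega) (Set.toFinite _),
    Set.ncard_pair (by
      simp only [ne_eq, fin2_ext, Matrix.cons_val_zero,
        Matrix.cons_val_one, Matrix.head_cons]; omega)]

lemma ND2_eq0 : Nbhd (adjK 1 2) (Dplus 2) ![0, 0] = {![1, 0], ![0, 1]} := by
  ext x
  simp only [Nbhd, Set.mem_sep_iff, Dplus, Set.mem_setOf_eq, Fin.forall_fin_two, adjK2_iff,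
    Set.mem_insert_iff, Set.mem_singleton_iff, fin2_ext, Matrix.cons_val_zero,
    Matrix.cons_val_one, Matrix.head_cons]
  omega

lemma ND2_eq1 : Nbhd (adjK 1 2) (Dplus 2) ![1, 0] = {![0, 0], ![2, 0], ![1, 1]} := by
  ext x
  simp only [Nbhd, Set.mem_sep_iff, Dplus, Set.mem_setOf_eq, Fin.forall_fin_two, adjK2_iff,
    Set.mem_insert_iff, Set.mem_singleton_iff, fin2_ext, Matrix.cons_val_zero,
    Matrix.cons_val_one, Matrix.head_cons]
  omega

lemma NZ1_eq (s : Fin 1 → ℤ) : Nbhd (adjK 1 1) Set.univ s = {![s 0 + 1], ![s 0 - 1]} := by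
  ext x
  simp only [Nbhd, Set.mem_sep_iff, Set.mem_univ, true_and, Set.mem_setOf_eq, adjK1_iff,
    Set.mem_insert_iff, Set.mem_singleton_iff, fin1_ext, Matrix.cons_val_zero]
  omega

lemma NZ1_ncard (s : Fin 1 → ℤ) : (Nbhd (adjK 1 1) Set.univ s).ncard = 2 := by
  rw [NZ1_eq]
  exact Set.ncard_pair (by simp only [ne_eq, fin1_ext, Matrix.cons_val_zero]; omega)

lemma N0_eq (M : Set (Fin 0 → ℤ)) (s : Fin 0 → ℤ) : Nbhd (adjK 1 0) M s = ∅ :=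
  Set.eq_empty_iff_forall_notMem.2 fun _ hx => adjK0 _ _ hx.2

lemma mem_dplus2_00 : ![0, 0] ∈ Dplus 2 := by
  intro k; fin_cases k <;> simp

lemma mem_dplus2_10 : ![1, 0] ∈ Dplus 2 := by
  intro k; fin_cases k <;> simp

lemma chartZ2 {M : Set (ℤ × ℤ)} {m : ℤ × ℤ} (hf : (Nbhd adj4 M m).Finite)
    (h : (Nbhd adj4 M m).ncard = 4) : ChartZ adj4 M m 2 :=
  ⟨![0, 0], digIso_discrete (fun _ hx _ hy => adj4_discrete hx.2 hy.2)
    (fun _ hx _ hy => adjK2_discrete hx.2 hy.2) hf (NZ2_finite _)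
    (by rw [h, NZ2_ncard])⟩

lemma chartD2_2 {M : Set (ℤ × ℤ)} {m : ℤ × ℤ} (hf : (Nbhd adj4 M m).Finite)
    (h : (Nbhd adj4 M m).ncard = 2) : ChartD adj4 M m 2 :=
  ⟨![0, 0], mem_dplus2_00, digIso_discrete (fun _ hx _ hy => adj4_discrete hx.2 hy.2)
    (fun _ hx _ hy => adjK2_discrete hx.2 hy.2) hf
    (by rw [ND2_eq0]; exact (Set.finite_singleton _).insert _)
    (by rw [h, ND2_eq0]
        rw [Set.ncard_pair (by
          simp only [ne_eq, fin2_ext, Matrix.cons_val_zero, Matrix.cons_val_one,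
            Matrix.head_cons]; omega)])⟩

lemma chartD2_3 {M : Set (ℤ × ℤ)} {m : ℤ × ℤ} (hf : (Nbhd adj4 M m).Finite)
    (h : (Nbhd adj4 M m).ncard = 3) : ChartD adj4 M m 2 :=
  ⟨![1, 0], mem_dplus2_10, digIso_discrete (fun _ hx _ hy => adj4_discrete hx.2 hy.2)
    (fun _ hx _ hy => adjK2_discrete hx.2 hy.2) hf
    (by rw [ND2_eq1]; exact ((Set.finite_singleton _).insert _).insert _)
    (by rw [h, ND2_eq1]
        rw [Set.ncard_insert_of_notMem (by
            simp only [Set.mem_insert_iff, Set.mem_singleton_iff, fin2_ext,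
              Matrix.cons_val_zero, Matrix.cons_val_one, Matrix.head_cons]; omega)
          (Set.toFinite _),
          Set.ncard_pair (by
            simp only [ne_eq, fin2_ext, Matrix.cons_val_zero, Matrix.cons_val_one,
              Matrix.head_cons]; omega)])⟩

lemma chartZ1 {M : Set (ℤ × ℤ)} {m : ℤ × ℤ} (hf : (Nbhd adj4 M m).Finite)
    (h : (Nbhd adj4 M m).ncard = 2) : ChartZ adj4 M m 1 :=
  ⟨![0], digIso_discrete (fun _ hx _ hy => adj4_discrete hx.2 hy.2)
    (fun _ hx _ hy => adjK1_discrete hx.2 hy.2) hf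
    (by rw [NZ1_eq]; exact (Set.finite_singleton _).insert _)
    (by rw [h, NZ1_ncard])⟩

lemma chartZ0 {X : Type*} {r : X → X → Prop} {M : Set X} {m : X}
    (h : Nbhd r M m = ∅) : ChartZ r M m 0 :=
  ⟨fun i => i.elim0, digIso_discrete (by rw [h]; rintro x ⟨⟩) (by rw [N0_eq]; rintro x ⟨⟩)
    (by rw [h]; exact Set.finite_empty) (by rw [N0_eq]; exact Set.finite_empty)
    (by rw [h, N0_eq]; simp)⟩

lemma not_chartZ2 {M : Set (ℤ × ℤ)} {m : ℤ × ℤ} (h : (Nbhd adj4 M m).ncard ≠ 4) :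
    ¬ ChartZ adj4 M m 2 := fun ⟨_, hiso⟩ => h (by rw [digIso_ncard_eq hiso, NZ2_ncard])

lemma not_chartZ1 {M : Set (ℤ × ℤ)} {m : ℤ × ℤ} (h : (Nbhd adj4 M m).ncard ≠ 2) :
    ¬ ChartZ adj4 M m 1 := fun ⟨_, hiso⟩ => h (by rw [digIso_ncard_eq hiso, NZ1_ncard])

lemma not_chartD1 {M : Set (ℤ × ℤ)} {m : ℤ × ℤ} (h : 2 < (Nbhd adj4 M m).ncard) :
    ¬ ChartD adj4 M m 1 := by
  rintro ⟨s, -, hiso⟩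
  have h1 := digIso_ncard_eq hiso
  have h2 : (Nbhd (adjK 1 1) (Dplus 1) s).ncard ≤ 2 := by
    rw [← NZ1_ncard s]
    exact Set.ncard_le_ncard (fun x hx => ⟨trivial, hx.2⟩)
      (by rw [NZ1_eq]; exact (Set.finite_singleton _).insert _)
  omega

lemma not_chartZ0 {X : Type*} {r : X → X → Prop} {M : Set X} {m : X}
    (h : (Nbhd r M m).Nonempty) : ¬ ChartZ r M m 0 := by
  rintro ⟨s, e, -⟩
  obtain ⟨x, hx⟩ := h
  exact adjK0 _ _ (e ⟨x, hx⟩).2.2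

lemma not_chartD0 {X : Type*} {r : X → X → Prop} {M : Set X} {m : X}
    (h : (Nbhd r M m).Nonempty) : ¬ ChartD r M m 0 := by
  rintro ⟨s, -, e, -⟩
  obtain ⟨x, hx⟩ := h
  exact adjK0 _ _ (e ⟨x, hx⟩).2.2

end Helpers2
section Helpers3

lemma ncard3 {X : Type*} {a b c : X} (h1 : a ≠ b) (h2 : a ≠ c) (h3 : b ≠ c) :
    ({a, b, c} : Set X).ncard = 3 := by
  rw [Set.ncard_insert_of_notMem (by simp [h1, h2]) ((Set.finite_singleton _).insert _),
    Set.ncard_pair h3]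

lemma ncard4 {X : Type*} {a b c d : X} (h1 : a ≠ b) (h2 : a ≠ c) (h3 : a ≠ d)
    (h4 : b ≠ c) (h5 : b ≠ d) (h6 : c ≠ d) :
    ({a, b, c, d} : Set X).ncard = 4 := by
  rw [Set.ncard_insert_of_notMem (by simp [h1, h2, h3])
    (((Set.finite_singleton _).insert _).insert _),
    Set.ncard_insert_of_notMem (by simp [h4, h5]) ((Set.finite_singleton _).insert _),
    Set.ncard_pair h6]

lemma eA11 : Nbhd adj4 Sq9 (1, 1) = {((2 : ℤ), (1 : ℤ)), ((1 : ℤ), (2 : ℤ))} := by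
  ext ⟨a, b⟩
  simp only [Nbhd, Set.mem_sep_iff, Sq9, Set.mem_setOf_eq, Set.mem_diff,
    Set.mem_insert_iff, Set.mem_singleton_iff, adj4, Prod.mk.injEq,
    Int.abs_eq_natAbs, ← Int.natCast_natAbs]
  omega

lemma eA12 : Nbhd adj4 Sq9 (1, 2) = {((1 : ℤ), (1 : ℤ)), ((1 : ℤ), (3 : ℤ)), ((2 : ℤ), (2 : ℤ))} := by
  ext ⟨a, b⟩
  simp only [Nbhd, Set.mem_sep_iff, Sq9, Set.mem_setOf_eq, Set.mem_diff,
    Set.mem_insert_iff, Set.mem_singleton_iff, adj4, Prod.mk.injEq,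
    Int.abs_eq_natAbs, ← Int.natCast_natAbs]
  omega

lemma eA13 : Nbhd adj4 Sq9 (1, 3) = {((1 : ℤ), (2 : ℤ)), ((2 : ℤ), (3 : ℤ))} := by
  ext ⟨a, b⟩
  simp only [Nbhd, Set.mem_sep_iff, Sq9, Set.mem_setOf_eq, Set.mem_diff,
    Set.mem_insert_iff, Set.mem_singleton_iff, adj4, Prod.mk.injEq,
    Int.abs_eq_natAbs, ← Int.natCast_natAbs]
  omega

lemma eA21 : Nbhd adj4 Sq9 (2, 1) = {((1 : ℤ), (1 : ℤ)), ((3 : ℤ), (1 : ℤ)), ((2 : ℤ), (2 : ℤ))} := by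
  ext ⟨a, b⟩
  simp only [Nbhd, Set.mem_sep_iff, Sq9, Set.mem_setOf_eq, Set.mem_diff,
    Set.mem_insert_iff, Set.mem_singleton_iff, adj4, Prod.mk.injEq,
    Int.abs_eq_natAbs, ← Int.natCast_natAbs]
  omega

lemma eA22 : Nbhd adj4 Sq9 (2, 2) = {((1 : ℤ), (2 : ℤ)), ((3 : ℤ), (2 : ℤ)), ((2 : ℤ), (1 : ℤ)), ((2 : ℤ), (3 : ℤ))} := by
  ext ⟨a, b⟩
  simp only [Nbhd, Set.mem_sep_iff, Sq9, Set.mem_setOf_eq, Set.mem_diff,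
    Set.mem_insert_iff, Set.mem_singleton_iff, adj4, Prod.mk.injEq,
    Int.abs_eq_natAbs, ← Int.natCast_natAbs]
  omega

lemma eA23 : Nbhd adj4 Sq9 (2, 3) = {((1 : ℤ), (3 : ℤ)), ((3 : ℤ), (3 : ℤ)), ((2 : ℤ), (2 : ℤ))} := by
  ext ⟨a, b⟩
  simp only [Nbhd, Set.mem_sep_iff, Sq9, Set.mem_setOf_eq, Set.mem_diff,
    Set.mem_insert_iff, Set.mem_singleton_iff, adj4, Prod.mk.injEq,
    Int.abs_eq_natAbs, ← Int.natCast_natAbs]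
  omega

lemma eA31 : Nbhd adj4 Sq9 (3, 1) = {((2 : ℤ), (1 : ℤ)), ((3 : ℤ), (2 : ℤ))} := by
  ext ⟨a, b⟩
  simp only [Nbhd, Set.mem_sep_iff, Sq9, Set.mem_setOf_eq, Set.mem_diff,
    Set.mem_insert_iff, Set.mem_singleton_iff, adj4, Prod.mk.injEq,
    Int.abs_eq_natAbs, ← Int.natCast_natAbs]
  omega

lemma eA32 : Nbhd adj4 Sq9 (3, 2) = {((3 : ℤ), (1 : ℤ)), ((3 : ℤ), (3 : ℤ)), ((2 : ℤ), (2 : ℤ))} := by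
  ext ⟨a, b⟩
  simp only [Nbhd, Set.mem_sep_iff, Sq9, Set.mem_setOf_eq, Set.mem_diff,
    Set.mem_insert_iff, Set.mem_singleton_iff, adj4, Prod.mk.injEq,
    Int.abs_eq_natAbs, ← Int.natCast_natAbs]
  omega

lemma eA33 : Nbhd adj4 Sq9 (3, 3) = {((3 : ℤ), (2 : ℤ)), ((2 : ℤ), (3 : ℤ))} := by
  ext ⟨a, b⟩
  simp only [Nbhd, Set.mem_sep_iff, Sq9, Set.mem_setOf_eq, Set.mem_diff,
    Set.mem_insert_iff, Set.mem_singleton_iff, adj4, Prod.mk.injEq,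
    Int.abs_eq_natAbs, ← Int.natCast_natAbs]
  omega

lemma eB11 : Nbhd adj4 (Sq9 \ {(2, 2)}) (1, 1) = {((2 : ℤ), (1 : ℤ)), ((1 : ℤ), (2 : ℤ))} := by
  ext ⟨a, b⟩
  simp only [Nbhd, Set.mem_sep_iff, Sq9, Set.mem_setOf_eq, Set.mem_diff,
    Set.mem_insert_iff, Set.mem_singleton_iff, adj4, Prod.mk.injEq,
    Int.abs_eq_natAbs, ← Int.natCast_natAbs]
  omega

lemma eB12 : Nbhd adj4 (Sq9 \ {(2, 2)}) (1, 2) = {((1 : ℤ), (1 : ℤ)), ((1 : ℤ), (3 : ℤ))} := by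
  ext ⟨a, b⟩
  simp only [Nbhd, Set.mem_sep_iff, Sq9, Set.mem_setOf_eq, Set.mem_diff,
    Set.mem_insert_iff, Set.mem_singleton_iff, adj4, Prod.mk.injEq,
    Int.abs_eq_natAbs, ← Int.natCast_natAbs]
  omega

lemma eB13 : Nbhd adj4 (Sq9 \ {(2, 2)}) (1, 3) = {((1 : ℤ), (2 : ℤ)), ((2 : ℤ), (3 : ℤ))} := by
  ext ⟨a, b⟩
  simp only [Nbhd, Set.mem_sep_iff, Sq9, Set.mem_setOf_eq, Set.mem_diff,
    Set.mem_insert_iff, Set.mem_singleton_iff, adj4, Prod.mk.injEq,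
    Int.abs_eq_natAbs, ← Int.natCast_natAbs]
  omega

lemma eB21 : Nbhd adj4 (Sq9 \ {(2, 2)}) (2, 1) = {((1 : ℤ), (1 : ℤ)), ((3 : ℤ), (1 : ℤ))} := by
  ext ⟨a, b⟩
  simp only [Nbhd, Set.mem_sep_iff, Sq9, Set.mem_setOf_eq, Set.mem_diff,
    Set.mem_insert_iff, Set.mem_singleton_iff, adj4, Prod.mk.injEq,
    Int.abs_eq_natAbs, ← Int.natCast_natAbs]
  omega

lemma eB23 : Nbhd adj4 (Sq9 \ {(2, 2)}) (2, 3) = {((1 : ℤ), (3 : ℤ)), ((3 : ℤ), (3 : ℤ))} := by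
  ext ⟨a, b⟩
  simp only [Nbhd, Set.mem_sep_iff, Sq9, Set.mem_setOf_eq, Set.mem_diff,
    Set.mem_insert_iff, Set.mem_singleton_iff, adj4, Prod.mk.injEq,
    Int.abs_eq_natAbs, ← Int.natCast_natAbs]
  omega

lemma eB31 : Nbhd adj4 (Sq9 \ {(2, 2)}) (3, 1) = {((2 : ℤ), (1 : ℤ)), ((3 : ℤ), (2 : ℤ))} := by
  ext ⟨a, b⟩
  simp only [Nbhd, Set.mem_sep_iff, Sq9, Set.mem_setOf_eq, Set.mem_diff,
    Set.mem_insert_iff, Set.mem_singleton_iff, adj4, Prod.mk.injEq,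
    Int.abs_eq_natAbs, ← Int.natCast_natAbs]
  omega

lemma eB32 : Nbhd adj4 (Sq9 \ {(2, 2)}) (3, 2) = {((3 : ℤ), (1 : ℤ)), ((3 : ℤ), (3 : ℤ))} := by
  ext ⟨a, b⟩
  simp only [Nbhd, Set.mem_sep_iff, Sq9, Set.mem_setOf_eq, Set.mem_diff,
    Set.mem_insert_iff, Set.mem_singleton_iff, adj4, Prod.mk.injEq,
    Int.abs_eq_natAbs, ← Int.natCast_natAbs]
  omega

lemma eB33 : Nbhd adj4 (Sq9 \ {(2, 2)}) (3, 3) = {((3 : ℤ), (2 : ℤ)), ((2 : ℤ), (3 : ℤ))} := by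
  ext ⟨a, b⟩
  simp only [Nbhd, Set.mem_sep_iff, Sq9, Set.mem_setOf_eq, Set.mem_diff,
    Set.mem_insert_iff, Set.mem_singleton_iff, adj4, Prod.mk.injEq,
    Int.abs_eq_natAbs, ← Int.natCast_natAbs]
  omega

lemma eC : Nbhd adj4 ({(2, 2)} : Set (ℤ × ℤ)) (2, 2) = ∅ := by
  refine Set.eq_empty_iff_forall_notMem.2 ?_
  rintro x ⟨hx, h2⟩
  rw [Set.mem_singleton_iff] at hx
  subst hx
  simp [adj4] at h2

end Helpers3

/-- `[1,3]_ℤ × [1,3]_ℤ` with the 4-adjacency is a digital 2-manifold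
with boundary with interior `{(2,2)}` and boundary `M \ {(2,2)}`; its interior is a
digital 0-manifold (not a digital 2-manifold) and its boundary is a digital
1-manifold all of whose points have exactly two pairwise non-adjacent neighbors. -/
theorem stmt_17 :
    IsDigManifoldBd adj4 Sq9 2 ∧
    dInterior adj4 Sq9 2 = {(2, 2)} ∧
    dBoundary adj4 Sq9 2 = Sq9 \ {(2, 2)} ∧
    IsDigManifold adj4 ({(2, 2)} : Set (ℤ × ℤ)) 0 ∧
    ¬ IsDigManifold adj4 ({(2, 2)} : Set (ℤ × ℤ)) 2 ∧
    IsDigManifold adj4 (Sq9 \ {(2, 2)}) 1 ∧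
    (∀ m ∈ Sq9 \ {(2, 2)},
      (Nbhd adj4 (Sq9 \ {(2, 2)}) m).ncard = 2 ∧
      ∀ p ∈ Nbhd adj4 (Sq9 \ {(2, 2)}) m, ∀ q ∈ Nbhd adj4 (Sq9 \ {(2, 2)}) m,
        ¬ adj4 p q) := by
  have hZ22 : ChartZ adj4 Sq9 (2, 2) 2 := chartZ2 (by rw [eA22]; exact ((((Set.finite_singleton _).insert _).insert _).insert _)) (by rw [eA22]; exact ncard4 (by decide) (by decide) (by decide) (by decide) (by decide) (by decide))
  have n22 : (Nbhd adj4 Sq9 (2, 2)).ncard = 4 := by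
    rw [eA22]; exact ncard4 (by decide) (by decide) (by decide) (by decide) (by decide) (by decide)
  have hnZ : ∀ a b : ℤ, 1 ≤ a → a ≤ 3 → 1 ≤ b → b ≤ 3 → ¬(a = 2 ∧ b = 2) →
      ¬ ChartZ adj4 Sq9 (a, b) 2 := by
    intro a b h1 h2 h3 h4 hne
    interval_cases a <;> interval_cases b
    · exact not_chartZ2 (by rw [eA11, Set.ncard_pair (by decide)]; decide)
    · exact not_chartZ2 (by rw [eA12, ncard3 (by decide) (by decide) (by decide)]; decide)
    · exact not_chartZ2 (by rw [eA13, Set.ncard_pair (by decide)]; decide)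
    · exact not_chartZ2 (by rw [eA21, ncard3 (by decide) (by decide) (by decide)]; decide)
    · exact absurd ⟨rfl, rfl⟩ hne
    · exact not_chartZ2 (by rw [eA23, ncard3 (by decide) (by decide) (by decide)]; decide)
    · exact not_chartZ2 (by rw [eA31, Set.ncard_pair (by decide)]; decide)
    · exact not_chartZ2 (by rw [eA32, ncard3 (by decide) (by decide) (by decide)]; decide)
    · exact not_chartZ2 (by rw [eA33, Set.ncard_pair (by decide)]; decide)
  refine ⟨⟨?_, ?_⟩, ?_, ?_, ?_, ?_, ⟨?_, ?_⟩, ?_⟩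
  · intro m hm
    obtain ⟨a, b⟩ := m
    simp only [Sq9, Set.mem_setOf_eq] at hm
    obtain ⟨h1, h2, h3, h4⟩ := hm
    interval_cases a <;> interval_cases b
    · exact Or.inr (chartD2_2 (by rw [eA11]; exact ((Set.finite_singleton _).insert _)) (by rw [eA11]; exact Set.ncard_pair (by decide)))
    · exact Or.inr (chartD2_3 (by rw [eA12]; exact (((Set.finite_singleton _).insert _).insert _)) (by rw [eA12]; exact ncard3 (by decide) (by decide) (by decide)))
    · exact Or.inr (chartD2_2 (by rw [eA13]; exact ((Set.finite_singleton _).insert _)) (by rw [eA13]; exact Set.ncard_pair (by decide)))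
    · exact Or.inr (chartD2_3 (by rw [eA21]; exact (((Set.finite_singleton _).insert _).insert _)) (by rw [eA21]; exact ncard3 (by decide) (by decide) (by decide)))
    · exact Or.inl hZ22
    · exact Or.inr (chartD2_3 (by rw [eA23]; exact (((Set.finite_singleton _).insert _).insert _)) (by rw [eA23]; exact ncard3 (by decide) (by decide) (by decide)))
    · exact Or.inr (chartD2_2 (by rw [eA31]; exact ((Set.finite_singleton _).insert _)) (by rw [eA31]; exact Set.ncard_pair (by decide)))
    · exact Or.inr (chartD2_3 (by rw [eA32]; exact (((Set.finite_singleton _).insert _).insert _)) (by rw [eA32]; exact ncard3 (by decide) (by decide) (by decide)))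
    · exact Or.inr (chartD2_2 (by rw [eA33]; exact ((Set.finite_singleton _).insert _)) (by rw [eA33]; exact Set.ncard_pair (by decide)))
  · intro k hk
    interval_cases k
    · intro hall
      rcases hall (1, 1) (by simp [Sq9]) with h | h
      · exact not_chartZ0 ⟨(2, 1), by norm_num [Sq9, Prod.ext_iff], by norm_num [adj4]⟩ h
      · exact not_chartD0 ⟨(2, 1), by norm_num [Sq9, Prod.ext_iff], by norm_num [adj4]⟩ h
    · intro hall
      rcases hall (2, 2) (by simp [Sq9]) with h | h
      · exact not_chartZ1 (by rw [n22]; decide) h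
      · exact not_chartD1 (by rw [n22]; decide) h
  · ext m
    simp only [dInterior, Set.mem_setOf_eq, Set.mem_singleton_iff]
    constructor
    · rintro ⟨hm, hc⟩
      obtain ⟨a, b⟩ := m
      simp only [Sq9, Set.mem_setOf_eq] at hm
      obtain ⟨h1, h2, h3, h4⟩ := hm
      by_contra hne
      rw [Prod.mk.injEq] at hne
      exact hnZ a b h1 h2 h3 h4 hne hc
    · rintro rfl
      exact ⟨by simp [Sq9], hZ22⟩
  · ext m
    simp only [dBoundary, Set.mem_setOf_eq, Set.mem_diff, Set.mem_singleton_iff]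
    constructor
    · rintro ⟨hm, hnc⟩
      refine ⟨hm, ?_⟩
      rintro rfl
      exact hnc hZ22
    · rintro ⟨hm, hne⟩
      refine ⟨hm, ?_⟩
      obtain ⟨a, b⟩ := m
      simp only [Sq9, Set.mem_setOf_eq] at hm
      rw [Prod.mk.injEq] at hne
      exact hnZ a b hm.1 hm.2.1 hm.2.2.1 hm.2.2.2 hne
  · exact ⟨fun m hm => chartZ0 (by rw [Set.eq_of_mem_singleton hm]; exact eC),
      fun k hk => absurd hk (by omega)⟩
  · rintro ⟨-, h2⟩
    exact h2 0 (by norm_num)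
      (fun m hm => chartZ0 (by rw [Set.eq_of_mem_singleton hm]; exact eC))
  · intro m hm
    obtain ⟨a, b⟩ := m
    simp only [Set.mem_diff, Sq9, Set.mem_setOf_eq, Set.mem_singleton_iff,
      Prod.mk.injEq] at hm
    obtain ⟨⟨h1, h2, h3, h4⟩, hne⟩ := hm
    interval_cases a <;> interval_cases b
    · exact chartZ1 (by rw [eB11]; exact ((Set.finite_singleton _).insert _)) (by rw [eB11]; exact Set.ncard_pair (by decide))
    · exact chartZ1 (by rw [eB12]; exact ((Set.finite_singleton _).insert _)) (by rw [eB12]; exact Set.ncard_pair (by decide))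
    · exact chartZ1 (by rw [eB13]; exact ((Set.finite_singleton _).insert _)) (by rw [eB13]; exact Set.ncard_pair (by decide))
    · exact chartZ1 (by rw [eB21]; exact ((Set.finite_singleton _).insert _)) (by rw [eB21]; exact Set.ncard_pair (by decide))
    · exact absurd ⟨rfl, rfl⟩ hne
    · exact chartZ1 (by rw [eB23]; exact ((Set.finite_singleton _).insert _)) (by rw [eB23]; exact Set.ncard_pair (by decide))
    · exact chartZ1 (by rw [eB31]; exact ((Set.finite_singleton _).insert _)) (by rw [eB31]; exact Set.ncard_pair (by decide))
    · exact chartZ1 (by rw [eB32]; exact ((Set.finite_singleton _).insert _)) (by rw [eB32]; exact Set.ncard_pair (by decide))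
    · exact chartZ1 (by rw [eB33]; exact ((Set.finite_singleton _).insert _)) (by rw [eB33]; exact Set.ncard_pair (by decide))
  · intro k hk
    interval_cases k
    intro hall
    exact not_chartZ0 ⟨(2, 1), by norm_num [Sq9, Prod.ext_iff], by norm_num [adj4]⟩ (hall (1, 1) (by norm_num [Sq9, Prod.ext_iff]))
  · intro m hm
    refine ⟨?_, fun p hp q hq => adj4_discrete hp.2 hq.2⟩
    obtain ⟨a, b⟩ := m
    simp only [Set.mem_diff, Sq9, Set.mem_setOf_eq, Set.mem_singleton_iff,
      Prod.mk.injEq] at hm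
    obtain ⟨⟨h1, h2, h3, h4⟩, hne⟩ := hm
    interval_cases a <;> interval_cases b
    · rw [eB11]; exact Set.ncard_pair (by decide)
    · rw [eB12]; exact Set.ncard_pair (by decide)
    · rw [eB13]; exact Set.ncard_pair (by decide)
    · rw [eB21]; exact Set.ncard_pair (by decide)
    · exact absurd ⟨rfl, rfl⟩ hne
    · rw [eB23]; exact Set.ncard_pair (by decide)
    · rw [eB31]; exact Set.ncard_pair (by decide)
    · rw [eB32]; exact Set.ncard_pair (by decide)
    · rw [eB33]; exact Set.ncard_pair (by decide)
end

section
/- A digitally connected digital manifold with boundary can have a digitally disconnected interior: the digital image M = ([0,4]_ℤ × [0,4]_ℤ) \ {(2,2)} ⊆ ℤ² with the 4-adjacency is digitally 4-connected and is a digital 2-manifold with boundary, its interior is int(M) = {(1,1), (1,3), (3,1), (3,3)} (the points of M having exactly four 4-neighbors in M), and int(M) is not digitally 4-connected (its four points are pairwise non-4-adjacent). -/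
/-- the digital image `M = ([0,4]_ℤ × [0,4]_ℤ) \ {(2,2)}` -/
def M18 : Set (ℤ × ℤ) :=
  {p | 0 ≤ p.1 ∧ p.1 ≤ 4 ∧ 0 ≤ p.2 ∧ p.2 ≤ 4} \ {(2, 2)}

/-! Under the `κ₁`-adjacency on `ℤⁿ`, as under the 4-adjacency on `ℤ²`, adjacent points have
coordinate sums of different parity, so no two neighbours of a point are adjacent. A digital
isomorphism between two such neighbourhoods is then just a bijection, and whether a point has a
chart depends only on its number of neighbours: `2n` in `ℤⁿ`, two at the corner and three at an
edge point of `D₊²`, at most `2n` anywhere in dimension `n`. In `M` the four points diagonal to the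
removed centre have four neighbours and every other point two or three, so `M` is a digital
2-manifold with boundary whose interior consists of those four pairwise non-adjacent points. -/

section Relations

variable {X Y : Type*}

theorem ncard_eq_of_digIso {rX : X → X → Prop} {A : Set X} {rY : Y → Y → Prop} {B : Set Y}
    (h : DigIso rX A rY B) : A.ncard = B.ncard := by
  obtain ⟨e, -⟩ := h
  rw [← Nat.card_coe_set_eq, ← Nat.card_coe_set_eq, Nat.card_congr e]

theorem digIso_of_ncard_eq {rX : X → X → Prop} {A : Set X} {rY : Y → Y → Prop} {B : Set Y}
    (hA : A.Finite) (hB : B.Finite) (hAr : ∀ x ∈ A, ∀ y ∈ A, ¬ rX x y)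
    (hBr : ∀ x ∈ B, ∀ y ∈ B, ¬ rY x y) (h : A.ncard = B.ncard) : DigIso rX A rY B := by
  have := hA.to_subtype
  have := hB.to_subtype
  rw [← Nat.card_coe_set_eq, ← Nat.card_coe_set_eq, Finite.card_eq] at h
  obtain ⟨e⟩ := h
  exact ⟨e, fun x y => iff_of_false (hAr _ x.2 _ y.2) (hBr _ (e x).2 _ (e y).2)⟩

theorem not_adj_of_mem_nbhd {r : X → X → Prop} (f : X → ℤ) (hf : ∀ x y, r x y → Odd (f x - f y))
    {S : Set X} {m x y : X} (hx : x ∈ Nbhd r S m) (hy : y ∈ Nbhd r S m) : ¬ r x y := by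
  intro hxy
  have heven : Even (f x - f y) := by
    simpa using (hf m y hy.2).sub_odd (hf m x hx.2)
  exact Int.not_even_iff_odd.mpr (hf x y hxy) heven

variable {r : X → X → Prop} {S : Set X}

theorem connOn_of_forall_reflTransGen [Std.Symm r] (c : X)
    (h : ∀ x ∈ S, Relation.ReflTransGen (fun p q => p ∈ S ∧ q ∈ S ∧ r p q) x c) :
    ConnOn r S := by
  have : Std.Symm (fun p q => p ∈ S ∧ q ∈ S ∧ r p q) :=
    ⟨fun p q ⟨hp, hq, hpq⟩ => ⟨hq, hp, Std.Symm.symm p q hpq⟩⟩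
  intro x hx y hy
  exact (h x hx).trans (Std.Symm.symm _ _ (h y hy))

theorem reflTransGen_of_descent (f : X → ℕ) (c : X)
    (hdesc : ∀ x ∈ S, x ≠ c → ∃ y ∈ S, r x y ∧ f y < f x) :
    ∀ x ∈ S, Relation.ReflTransGen (fun p q => p ∈ S ∧ q ∈ S ∧ r p q) x c := by
  intro x
  induction hfx : f x using Nat.strong_induction_on generalizing x with
  | _ n ih =>
    intro hx
    by_cases hxc : x = c
    · rw [hxc]
    obtain ⟨y, hy, hxy, hlt⟩ := hdesc x hx hxc
    exact .head ⟨hx, hy, hxy⟩ (ih (f y) (hfx ▸ hlt) y rfl hy)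

theorem not_connOn_of_forall_not_adj {x y : X} (hx : x ∈ S) (hy : y ∈ S) (hxy : x ≠ y)
    (h : ∀ p ∈ S, ∀ q ∈ S, ¬ r p q) : ¬ ConnOn r S := by
  intro hS
  obtain heq | ⟨z, ⟨-, hz, hxz⟩, -⟩ := (hS x hx y hy).cases_head
  · exact hxy heq
  · exact h x hx z hz hxz

end Relations

section AdjK

variable {n : ℕ}

def unitSteps (n : ℕ) : Finset (Fin n × ℤ) := Finset.univ ×ˢ {1, -1}

theorem card_unitSteps : (unitSteps n).card = 2 * n := by
  simp [unitSteps, mul_comm]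

theorem adjK_one_iff {s x : Fin n → ℤ} :
    adjK 1 n s x ↔ ∃ p ∈ unitSteps n, x = s + Pi.single p.1 p.2 := by
  classical
  simp only [unitSteps, Finset.mem_product, Finset.mem_univ, true_and, Finset.mem_insert,
    Finset.mem_singleton, Prod.exists]
  constructor
  · rintro ⟨hne, hle, hcard⟩
    obtain ⟨i, hi⟩ := Function.ne_iff.mp hne
    have hother : ∀ k, k ≠ i → s k = x k := fun k hk => by
      by_contra hsk
      exact hk (Finset.card_le_one.mp hcard k (by simpa using hsk) i (by simpa using hi))
    refine ⟨i, x i - s i, ?_, funext fun k => ?_⟩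
    · have := hle i
      rw [abs_le] at this
      omega
    · rcases eq_or_ne k i with rfl | hk
      · simp
      · simp [hk, hother k hk]
  · rintro ⟨i, e, he, rfl⟩
    refine ⟨fun h => ?_, fun k => ?_, ?_⟩
    · have := congr_fun h i
      simp only [Pi.add_apply, Pi.single_eq_same] at this
      omega
    · rcases eq_or_ne k i with rfl | hk
      · simp only [Pi.add_apply, Pi.single_eq_same]
        rcases he with rfl | rfl <;> simp
      · simp [hk]
    · refine Finset.card_le_one.mpr fun a ha b hb => ?_
      simp only [Finset.mem_filter, Finset.mem_univ, true_and] at ha hb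
      by_contra hab
      rcases eq_or_ne a i with rfl | hai
      · exact hb (by simp [Ne.symm hab])
      · exact ha (by simp [hai])

theorem injOn_add_single_unitSteps (s : Fin n → ℤ) :
    Set.InjOn (fun p : Fin n × ℤ => s + Pi.single p.1 p.2) (unitSteps n) := by
  rintro ⟨i, e⟩ hp ⟨j, f⟩ hq h
  simp only [unitSteps, Finset.coe_product, Finset.coe_univ, Set.mem_prod, Set.mem_univ,
    Finset.coe_insert, Finset.coe_singleton, Set.mem_insert_iff, Set.mem_singleton_iff,
    true_and, add_right_inj] at hp hq h
  have hi := congr_fun h i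
  have hj := congr_fun h j
  by_cases hij : i = j
  · subst hij
    simp_all
  · simp [hij, Ne.symm hij] at hi hj
    omega

theorem nbhd_adjK_one_eq_image (S : Set (Fin n → ℤ)) (s : Fin n → ℤ) :
    Nbhd (adjK 1 n) S s = (fun p : Fin n × ℤ => s + Pi.single p.1 p.2) ''
      {p ∈ (unitSteps n : Set (Fin n × ℤ)) | s + Pi.single p.1 p.2 ∈ S} := by
  ext x
  simp only [Nbhd, adjK_one_iff, Set.mem_ofPred_eq, Set.mem_image, Finset.mem_coe]
  constructor
  · rintro ⟨hx, p, hp, rfl⟩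
    exact ⟨p, ⟨hp, hx⟩, rfl⟩
  · rintro ⟨p, ⟨hp, hx⟩, rfl⟩
    exact ⟨hx, p, hp, rfl⟩

theorem finite_nbhd_adjK_one (S : Set (Fin n → ℤ)) (s : Fin n → ℤ) :
    (Nbhd (adjK 1 n) S s).Finite := by
  rw [nbhd_adjK_one_eq_image]
  exact ((unitSteps n).finite_toSet.subset fun p hp => hp.1).image _

open Classical in
theorem ncard_nbhd_adjK_one (S : Set (Fin n → ℤ)) (s : Fin n → ℤ) :
    (Nbhd (adjK 1 n) S s).ncard =
      ((unitSteps n).filter fun p => s + Pi.single p.1 p.2 ∈ S).card := by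
  rw [nbhd_adjK_one_eq_image, ((injOn_add_single_unitSteps s).mono fun p hp => hp.1).ncard_image,
    ← Set.ncard_coe_finset, Finset.coe_filter]
  rfl

theorem ncard_nbhd_adjK_one_le (S : Set (Fin n → ℤ)) (s : Fin n → ℤ) :
    (Nbhd (adjK 1 n) S s).ncard ≤ 2 * n := by
  classical
  rw [ncard_nbhd_adjK_one, ← card_unitSteps]
  exact Finset.card_filter_le _ _

theorem ncard_nbhd_adjK_one_univ (s : Fin n → ℤ) :
    (Nbhd (adjK 1 n) Set.univ s).ncard = 2 * n := by
  classical
  rw [ncard_nbhd_adjK_one, ← card_unitSteps]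
  simp

theorem ncard_nbhd_adjK_one_Dplus {s : Fin n → ℤ} (hs : s ∈ Dplus n) :
    (Nbhd (adjK 1 n) (Dplus n) s).ncard =
      ((unitSteps n).filter fun p => 0 ≤ s p.1 + p.2).card := by
  classical
  rw [ncard_nbhd_adjK_one]
  congr 1
  refine Finset.filter_congr fun p _ => ⟨fun h => by simpa using h p.1, fun h k => ?_⟩
  rcases eq_or_ne k p.1 with rfl | hk
  · simpa using h
  · simpa [hk] using hs k

theorem adjK_one_odd {x y : Fin n → ℤ} (h : adjK 1 n x y) : Odd (∑ k, x k - ∑ k, y k) := by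
  obtain ⟨⟨i, e⟩, he, rfl⟩ := adjK_one_iff.mp h
  simp only [unitSteps, Finset.mem_product, Finset.mem_univ, Finset.mem_insert,
    Finset.mem_singleton, true_and] at he
  rcases he with rfl | rfl <;> simp [Finset.sum_add_distrib]

theorem not_adjK_of_mem_nbhd {S : Set (Fin n → ℤ)} {s : Fin n → ℤ} :
    ∀ x ∈ Nbhd (adjK 1 n) S s, ∀ y ∈ Nbhd (adjK 1 n) S s, ¬ adjK 1 n x y :=
  fun _ hx _ hy =>
    not_adj_of_mem_nbhd (fun x : Fin n → ℤ => ∑ k, x k) (fun _ _ => adjK_one_odd) hx hy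

end AdjK

section Charts

variable {X : Type*} {r : X → X → Prop} {M : Set X} {m : X}

theorem ncard_nbhd_le_of_chart {k : ℕ} (h : ChartZ r M m k ∨ ChartD r M m k) :
    (Nbhd r M m).ncard ≤ 2 * k := by
  obtain ⟨s, hs⟩ | ⟨s, -, hs⟩ := h <;> rw [ncard_eq_of_digIso hs] <;>
    exact ncard_nbhd_adjK_one_le _ s

variable (hfin : (Nbhd r M m).Finite)
  (hfree : ∀ x ∈ Nbhd r M m, ∀ y ∈ Nbhd r M m, ¬ r x y)
include hfin hfree

theorem chartZ_iff_ncard_nbhd {n : ℕ} : ChartZ r M m n ↔ (Nbhd r M m).ncard = 2 * n := by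
  refine ⟨fun ⟨s, hs⟩ => (ncard_eq_of_digIso hs).trans (ncard_nbhd_adjK_one_univ s),
    fun h => ⟨0, ?_⟩⟩
  exact digIso_of_ncard_eq hfin (finite_nbhd_adjK_one _ _) hfree not_adjK_of_mem_nbhd
    (h.trans (ncard_nbhd_adjK_one_univ 0).symm)

theorem chartD_of_ncard_nbhd_Dplus {n : ℕ} {s : Fin n → ℤ} (hs : s ∈ Dplus n)
    (h : (Nbhd r M m).ncard = (Nbhd (adjK 1 n) (Dplus n) s).ncard) : ChartD r M m n :=
  ⟨s, hs, digIso_of_ncard_eq hfin (finite_nbhd_adjK_one _ _) hfree not_adjK_of_mem_nbhd h⟩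

/-- The corner `0` and the edge point `(0, 1)` of `D₊²` have two and three neighbours. -/
theorem chartD_two_of_ncard_nbhd (h : (Nbhd r M m).ncard = 2 ∨ (Nbhd r M m).ncard = 3) :
    ChartD r M m 2 := by
  rcases h with h | h
  · have hs : (0 : Fin 2 → ℤ) ∈ Dplus 2 := fun _ => le_rfl
    refine chartD_of_ncard_nbhd_Dplus hfin hfree hs ?_
    rw [h, ncard_nbhd_adjK_one_Dplus hs]
    decide
  · have hs : (![0, 1] : Fin 2 → ℤ) ∈ Dplus 2 := by simp [Dplus, Fin.forall_fin_two]
    refine chartD_of_ncard_nbhd_Dplus hfin hfree hs ?_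
    rw [h, ncard_nbhd_adjK_one_Dplus hs]
    decide

end Charts

section Adj4

instance : DecidableRel adj4 := fun _ _ => inferInstanceAs (Decidable (_ = _))

def adj4Steps : Finset (ℤ × ℤ) := {(1, 0), (-1, 0), (0, 1), (0, -1)}

theorem adj4_iff_sub_mem {p q : ℤ × ℤ} : adj4 p q ↔ q - p ∈ adj4Steps := by
  obtain ⟨a, b⟩ := p
  obtain ⟨c, d⟩ := q
  simp only [adj4, adj4Steps, Finset.mem_insert, Finset.mem_singleton, Prod.mk_sub_mk,
    Prod.mk.injEq]
  rcases abs_cases (a - c) with ⟨h1, _⟩ | ⟨h1, _⟩ <;>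
    rcases abs_cases (b - d) with ⟨h2, _⟩ | ⟨h2, _⟩ <;> rw [h1, h2] <;> omega

instance : Std.Symm adj4 :=
  ⟨fun p q h => by rwa [adj4, abs_sub_comm q.1, abs_sub_comm q.2]⟩

theorem adj4_odd {p q : ℤ × ℤ} (h : adj4 p q) : Odd (p.1 + p.2 - (q.1 + q.2)) := by
  rw [adj4] at h
  rw [Int.odd_iff]
  rcases abs_cases (p.1 - q.1) with ⟨h1, _⟩ | ⟨h1, _⟩ <;>
    rcases abs_cases (p.2 - q.2) with ⟨h2, _⟩ | ⟨h2, _⟩ <;> omega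

theorem not_adj4_of_mem_nbhd {M : Set (ℤ × ℤ)} {m : ℤ × ℤ} :
    ∀ x ∈ Nbhd adj4 M m, ∀ y ∈ Nbhd adj4 M m, ¬ adj4 x y :=
  fun _ hx _ hy => not_adj_of_mem_nbhd (fun p => p.1 + p.2) (fun _ _ => adj4_odd) hx hy

theorem nbhd_adj4_eq_image (M : Set (ℤ × ℤ)) (m : ℤ × ℤ) :
    Nbhd adj4 M m = (m + ·) '' {d ∈ (adj4Steps : Set (ℤ × ℤ)) | m + d ∈ M} := by
  ext p
  simp only [Nbhd, adj4_iff_sub_mem, Set.mem_ofPred_eq, Set.mem_image, Finset.mem_coe]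
  exact ⟨fun ⟨hp, h⟩ => ⟨p - m, ⟨h, by simpa⟩, by simp⟩,
    by rintro ⟨d, ⟨hd, hmd⟩, rfl⟩; exact ⟨hmd, by simpa⟩⟩

theorem finite_nbhd_adj4 (M : Set (ℤ × ℤ)) (m : ℤ × ℤ) : (Nbhd adj4 M m).Finite := by
  rw [nbhd_adj4_eq_image]
  exact (adj4Steps.finite_toSet.subset fun d hd => hd.1).image _

theorem ncard_nbhd_adj4 (M : Set (ℤ × ℤ)) [DecidablePred (· ∈ M)] (m : ℤ × ℤ) :
    (Nbhd adj4 M m).ncard = (adj4Steps.filter fun d => m + d ∈ M).card := by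
  rw [nbhd_adj4_eq_image, (add_right_injective m).injOn.ncard_image,
    ← Set.ncard_coe_finset, Finset.coe_filter]
  rfl

theorem ncard_nbhd_adj4_le (M : Set (ℤ × ℤ)) (m : ℤ × ℤ) : (Nbhd adj4 M m).ncard ≤ 4 := by
  classical
  rw [ncard_nbhd_adj4]
  exact (Finset.card_filter_le _ _).trans (by decide)

theorem chartZ_adj4_two_iff (M : Set (ℤ × ℤ)) (m : ℤ × ℤ) :
    ChartZ adj4 M m 2 ↔ (Nbhd adj4 M m).ncard = 4 :=
  chartZ_iff_ncard_nbhd (finite_nbhd_adj4 M m) not_adj4_of_mem_nbhd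

end Adj4

section M18

instance : DecidablePred (· ∈ M18) := fun m =>
  inferInstanceAs (Decidable ((0 ≤ m.1 ∧ m.1 ≤ 4 ∧ 0 ≤ m.2 ∧ m.2 ≤ 4) ∧ m ≠ (2, 2)))

theorem forall_mem_M18 {P : ℤ × ℤ → Prop} :
    (∀ m ∈ M18, P m) ↔ ∀ m ∈ (Finset.Icc 0 4 ×ˢ Finset.Icc 0 4 : Finset (ℤ × ℤ)).erase (2, 2),
      P m := by
  simp [M18, and_comm, and_assoc]

theorem ncard_nbhd_adj4_M18 : ∀ m ∈ M18, 2 ≤ (Nbhd adj4 M18 m).ncard ∧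
    ((Nbhd adj4 M18 m).ncard = 4 ↔ m ∈ ({(1, 1), (1, 3), (3, 1), (3, 3)} : Finset (ℤ × ℤ))) := by
  simp only [ncard_nbhd_adj4]
  rw [forall_mem_M18]
  decide

theorem setOf_ncard_nbhd_adj4_M18_eq_four :
    {m ∈ M18 | (Nbhd adj4 M18 m).ncard = 4} = {(1, 1), (1, 3), (3, 1), (3, 3)} := by
  ext m
  have hcorner : m ∈ ({(1, 1), (1, 3), (3, 1), (3, 3)} : Set (ℤ × ℤ)) → m ∈ M18 := by
    simp only [Set.mem_insert_iff, Set.mem_singleton_iff]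
    rintro (rfl | rfl | rfl | rfl) <;> decide
  constructor
  · rintro ⟨hm, h⟩
    simpa using (ncard_nbhd_adj4_M18 m hm).2.mp h
  · intro h
    exact ⟨hcorner h, (ncard_nbhd_adj4_M18 m (hcorner h)).2.mpr (by simpa using h)⟩

theorem dInterior_M18 : dInterior adj4 M18 2 = {(1, 1), (1, 3), (3, 1), (3, 3)} := by
  simp only [dInterior, chartZ_adj4_two_iff]
  exact setOf_ncard_nbhd_adj4_M18_eq_four

theorem isDigManifoldBd_M18 : IsDigManifoldBd adj4 M18 2 := by
  refine ⟨fun m hm => ?_, fun k hk hcharts => ?_⟩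
  · have h2 := (ncard_nbhd_adj4_M18 m hm).1
    have h4 := ncard_nbhd_adj4_le M18 m
    obtain h | h : (Nbhd adj4 M18 m).ncard = 4 ∨
        (Nbhd adj4 M18 m).ncard = 2 ∨ (Nbhd adj4 M18 m).ncard = 3 := by omega
    · exact .inl ((chartZ_adj4_two_iff M18 m).mpr h)
    · exact .inr (chartD_two_of_ncard_nbhd (finite_nbhd_adj4 M18 m) not_adj4_of_mem_nbhd h)
  · have h11 : ((1, 1) : ℤ × ℤ) ∈ M18 := by decide
    have hle := ncard_nbhd_le_of_chart (hcharts (1, 1) h11)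
    have h4 := (ncard_nbhd_adj4_M18 (1, 1) h11).2.mpr (by decide)
    omega

theorem connOn_M18 : ConnOn adj4 M18 := by
  refine connOn_of_forall_reflTransGen (0, 0) <|
    reflTransGen_of_descent (fun m => (m.1 + m.2).toNat) (0, 0) fun m hm hm0 => ?_
  have hstep : ∀ m ∈ M18, m ≠ (0, 0) →
      ∃ d ∈ ({(-1, 0), (0, -1)} : Finset (ℤ × ℤ)), m + d ∈ M18 := by
    rw [forall_mem_M18]
    decide
  obtain ⟨d, hd, hmd⟩ := hstep m hm hm0
  refine ⟨m + d, hmd, ?_, ?_⟩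
  · rw [adj4_iff_sub_mem, add_sub_cancel_left]
    simp only [Finset.mem_insert, Finset.mem_singleton] at hd
    rcases hd with rfl | rfl <;> decide
  · obtain ⟨⟨h1, -, h2, -⟩, -⟩ := hmd
    simp only [Finset.mem_insert, Finset.mem_singleton] at hd
    rcases hd with rfl | rfl <;> simp only [Prod.fst_add, Prod.snd_add] at h1 h2 ⊢ <;> omega

theorem corners_not_adj4 : ∀ p ∈ ({(1, 1), (1, 3), (3, 1), (3, 3)} : Set (ℤ × ℤ)),
    ∀ q ∈ ({(1, 1), (1, 3), (3, 1), (3, 3)} : Set (ℤ × ℤ)), ¬ adj4 p q := by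
  simp only [Set.mem_insert_iff, Set.mem_singleton_iff, forall_eq_or_imp, forall_eq]
  decide

end M18

/-- `M = ([0,4]²_ℤ) \ {(2,2)}` with the 4-adjacency is digitally
4-connected and a digital 2-manifold with boundary, its interior is
`{(1,1),(1,3),(3,1),(3,3)}` (exactly the points with four 4-neighbors in `M`),
and this interior is not digitally 4-connected (its points are pairwise
non-4-adjacent). -/
theorem stmt_18 :
    ConnOn adj4 M18 ∧
    IsDigManifoldBd adj4 M18 2 ∧
    dInterior adj4 M18 2 = {(1, 1), (1, 3), (3, 1), (3, 3)} ∧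
    {m ∈ M18 | (Nbhd adj4 M18 m).ncard = 4} = {(1, 1), (1, 3), (3, 1), (3, 3)} ∧
    (∀ p ∈ ({(1, 1), (1, 3), (3, 1), (3, 3)} : Set (ℤ × ℤ)),
      ∀ q ∈ ({(1, 1), (1, 3), (3, 1), (3, 3)} : Set (ℤ × ℤ)), ¬ adj4 p q) ∧
    ¬ ConnOn adj4 ({(1, 1), (1, 3), (3, 1), (3, 3)} : Set (ℤ × ℤ)) :=
  ⟨connOn_M18, isDigManifoldBd_M18, dInterior_M18, setOf_ncard_nbhd_adj4_M18_eq_four,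
    corners_not_adj4, not_connOn_of_forall_not_adj (x := (1, 1)) (y := (1, 3)) (by simp) (by simp)
      (by decide) corners_not_adj4⟩
end
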